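/- Let A be an algebra. If A satisfies the condition that (R₁∘R₂) ∩ T ⊆ (T ∩ (R₂⁻ ∘ (T ∩ (R₁⁻∘R₁)) ∘ R₂))* for every tolerance T and all reflexive compatible relations R₁, R₂, then A satisfies: for every tolerance T and all reflexive compatible relations R₁, R₂, R₁ ∩ (T ∘ R₂) ⊆ (T ∩ (R₂ ∘ (T ∩ (R₁⁻∘R₁)) ∘ R₂⁻))* ∘ R₂. -/

import Mathlib

open FirstOrder Language

universe u

/-- A binary relation on a structure `A` is compatible (admissible) if it is preserved
by every operation (function symbol) of the language. -/
def Compatible (L : Language) {A : Type u} [L.Structure A] (R : A → A → Prop) : Prop :=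
  ∀ (n : ℕ) (f : L.Functions n) (a b : Fin n → A),
    (∀ i, R (a i) (b i)) → R (Structure.funMap f a) (Structure.funMap f b)

/-- `(x, y; z, w) ∈ M(R, S)`: there is a term `t` and tuples `a R a'`, `b S b'` with
`x = t(a,b)`, `y = t(a,b')`, `z = t(a',b)`, `w = t(a',b')`. -/
def InM (L : Language) {A : Type u} [L.Structure A] (R S : A → A → Prop)
    (x y z w : A) : Prop :=
  ∃ (n m : ℕ) (t : L.Term (Fin n ⊕ Fin m)) (a a' : Fin n → A) (b b' : Fin m → A),
    (∀ i, R (a i) (a' i)) ∧ (∀ j, S (b j) (b' j)) ∧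
      x = t.realize (Sum.elim a b) ∧ y = t.realize (Sum.elim a b') ∧
      z = t.realize (Sum.elim a' b) ∧ w = t.realize (Sum.elim a' b')

/-- `[R, S | 1]`: the transitive closure of `{(z,w) : (x,x;z,w) ∈ M(R,S) for some x}`. -/
def comm1 (L : Language) {A : Type u} [L.Structure A] (R S : A → A → Prop) :
    A → A → Prop :=
  Relation.TransGen (fun z w => ∃ x, InM L R S x x z w)

/-- Relational composition. -/
def rcomp {A : Type u} (R S : A → A → Prop) : A → A → Prop :=
  fun a c => ∃ b, R a b ∧ S b c

/-- Converse of a relation. -/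
def rconv {A : Type u} (R : A → A → Prop) : A → A → Prop := fun a b => R b a

/-- Intersection of relations. -/
def rinter {A : Type u} (R S : A → A → Prop) : A → A → Prop := fun a b => R a b ∧ S a b

/-- A congruence: a compatible equivalence relation. -/
def IsCongruence (L : Language) {A : Type u} [L.Structure A] (θ : A → A → Prop) : Prop :=
  Equivalence θ ∧ Compatible L θ

/-- A tolerance: a reflexive symmetric compatible relation. -/
def IsTolerance (L : Language) {A : Type u} [L.Structure A] (T : A → A → Prop) : Prop :=
  Reflexive T ∧ Symmetric T ∧ Compatible L T

/-- `Cg R`: the smallest congruence containing `R` (intersection of all congruences ⊇ R). -/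
def Cg (L : Language) {A : Type u} [L.Structure A] (R : A → A → Prop) : A → A → Prop :=
  fun a b => ∀ θ : A → A → Prop, IsCongruence L θ → (∀ x y, R x y → θ x y) → θ a b

/-- `R°`: the smallest tolerance containing `R`. -/
def tolC (L : Language) {A : Type u} [L.Structure A] (R : A → A → Prop) : A → A → Prop :=
  fun a b => ∀ T : A → A → Prop, IsTolerance L T → (∀ x y, R x y → T x y) → T a b

/-- `K(R,S;V) = {(z,w) : ∃ x y, (x,y;z,w) ∈ M(R,S) ∧ x V y}`. -/
def Kop (L : Language) {A : Type u} [L.Structure A] (R S V : A → A → Prop) :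
    A → A → Prop :=
  fun z w => ∃ x y, InM L R S x y z w ∧ V x y

/-- The join `γ ∨ D`: the smallest congruence containing both `γ` and `D`. -/
def cgJoin (L : Language) {A : Type u} [L.Structure A] (γ D : A → A → Prop) :
    A → A → Prop :=
  fun a b => ∀ θ : A → A → Prop, IsCongruence L θ → (∀ x y, γ x y → θ x y) →
    (∀ x y, D x y → θ x y) → θ a b

variable {L : Language} {A : Type u} [L.Structure A]

theorem Reflexive.rconv {R : A → A → Prop} (hR : Reflexive R) : Reflexive (rconv R) :=
  fun x => hR x

theorem Compatible.rconv {R : A → A → Prop} (hR : Compatible L R) :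
    Compatible L (rconv R) :=
  fun n f a b hab => hR n f b a hab

theorem stmt13
    (h : ∀ T : A → A → Prop, IsTolerance L T →
      ∀ R₁ R₂ : A → A → Prop, Reflexive R₁ → Compatible L R₁ →
        Reflexive R₂ → Compatible L R₂ →
        ∀ a b, rcomp R₁ R₂ a b ∧ T a b →
          Relation.TransGen
            (rinter T (rcomp (rconv R₂) (rcomp (rinter T (rcomp (rconv R₁) R₁)) R₂))) a b) :
    ∀ T : A → A → Prop, IsTolerance L T →
      ∀ R₁ R₂ : A → A → Prop, Reflexive R₁ → Compatible L R₁ →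
        Reflexive R₂ → Compatible L R₂ →
        ∀ a b, R₁ a b ∧ rcomp T R₂ a b →
          rcomp
            (Relation.TransGen
              (rinter T (rcomp R₂ (rcomp (rinter T (rcomp (rconv R₁) R₁)) (rconv R₂)))))
            R₂ a b := by
  rintro T hT R₁ R₂ hR₁r hR₁c hR₂r hR₂c a b ⟨hab, c, hac, hcb⟩
  -- The hypothesis for `R₁` and `R₂⁻` at `(a, c)`, since `a R₁ b R₂⁻ c` and `(R₂⁻)⁻ = R₂`.
  exact ⟨c, h T hT R₁ (rconv R₂) hR₁r hR₁c hR₂r.rconv hR₂c.rconv a c ⟨⟨b, hab, hcb⟩, hac⟩, hcb⟩
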